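/- Let X be a real m×p matrix with m ≥ p such that XᵀX is invertible, with d_min > 0 the smallest eigenvalue of (1/m)XᵀX, let σ² > 0, ε > 0 and 0 < M < ∞, and suppose m > 32(log 2)σ²p/(ε²·d_min). Then there exist constants C > 0 and N ≥ 1, depending only on ε, m, p, σ², d_min and M, with the following property: for every n ≥ N, every set of points s₁,…,s_n, and every pair of maps β⁰, β¹ : {s₁,…,s_n} → ℝ^p whose coordinate values are all bounded in absolute value by M and which satisfy max_{1≤k≤p} (1/n)·Σ_{i=1}^n |β¹_k(s_i) − β⁰_k(s_i)| ≥ ε, there exists a measurable test Φ : (ℝ^m)^n → {0,1} such that E_{P₀}[Φ] ≤ exp(−C·n) and E_{P₁}[1 − Φ] ≤ exp(−C·n), where for t ∈ {0,1}, P_t is the product measure under which y₁,…,y_n are independent with y_i ∼ N(Xβ^t(s_i), σ²I_m). -/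

import Mathlib

/-!
The likelihood-ratio test `Φ = 1{p₀ ≤ p₁}` has both error probabilities bounded by the
Bhattacharyya affinity `∫ √(p₀ p₁)`. For two Gaussians with covariance `σ²I` this affinity is
`exp(-|μ₀ - μ₁|² / (8σ²))`, and it multiplies over independent observations. Since
`XᵀX ≥ m d_min I`, the total squared distance of the means is at least
`m d_min Σᵢ |β⁰(sᵢ) - β¹(sᵢ)|²`, which by Cauchy–Schwarz on a separated coordinate is at least
`m d_min n ε²`. Hence `C = ε² d_min m / (8σ²)` and `N = 1` work.
-/

open MeasureTheory Matrix

/-- The Lebesgue density of the Gaussian measure `N(μ, σ²I_m)` on `ℝ^m`. -/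
noncomputable def gaussDensity (m : ℕ) (μ : Fin m → ℝ) (σ2 : ℝ) (y : Fin m → ℝ) : ℝ :=
  (2 * Real.pi * σ2) ^ (-(m : ℝ) / 2) * Real.exp (-(∑ i, (y i - μ i) ^ 2) / (2 * σ2))

/-- The Gaussian probability measure `N(μ, σ²I_m)` on `ℝ^m`, given by its density
with respect to Lebesgue measure. -/
noncomputable def gaussMeasure (m : ℕ) (μ : Fin m → ℝ) (σ2 : ℝ) : Measure (Fin m → ℝ) :=
  volume.withDensity fun y => ENNReal.ofReal (gaussDensity m μ σ2 y)

open ProbabilityTheory Finset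
open scoped ENNReal

theorem lintegral_fin_nat_prod_eq_prod {n : ℕ} {E : Fin n → Type*}
    [∀ i, MeasurableSpace (E i)] (μ : ∀ i, Measure (E i)) [∀ i, SigmaFinite (μ i)]
    (f : (i : Fin n) → E i → ℝ≥0∞) (hf : ∀ i, Measurable (f i)) :
    ∫⁻ x : (i : Fin n) → E i, ∏ i, f i (x i) ∂Measure.pi μ = ∏ i, ∫⁻ x, f i x ∂μ i := by
  induction n with
  | zero => simp
  | succ n ih =>
    calc
      _ = ∫⁻ x : E 0 × ((i : Fin n) → E i.succ), f 0 x.1 * ∏ i : Fin n, f i.succ (x.2 i)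
            ∂(μ 0).prod (Measure.pi fun i => μ i.succ) := by
        rw [← (measurePreserving_piFinSuccAbove μ 0).symm.lintegral_comp_emb
          (MeasurableEquiv.measurableEmbedding _)]
        congr 1 with x
        simp_rw [MeasurableEquiv.piFinSuccAbove_symm_apply, Fin.insertNthEquiv,
          Fin.prod_univ_succ, Fin.insertNth_zero, Equiv.coe_fn_mk, Fin.cons_succ, Fin.cons_zero]
        rfl
      _ = (∫⁻ x, f 0 x ∂μ 0) * ∏ i : Fin n, ∫⁻ x, f i.succ x ∂μ i.succ := by
        rw [lintegral_prod_mul (f := f 0)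
          (g := fun x : (i : Fin n) → E i.succ => ∏ i, f i.succ (x i)) (hf 0).aemeasurable
          (Finset.measurable_prod _ fun i _ => (hf _).comp (measurable_pi_apply i)).aemeasurable,
          ih _ _ fun i => hf _]
      _ = ∏ i, ∫⁻ x, f i x ∂μ i := by rw [Fin.prod_univ_succ]

section Pi

variable {ι : Type*} [Fintype ι] {E : ι → Type*} [∀ i, MeasurableSpace (E i)]
  (μ : ∀ i, Measure (E i)) [∀ i, SigmaFinite (μ i)]

theorem lintegral_fintype_prod_eq_prod (f : (i : ι) → E i → ℝ≥0∞) (hf : ∀ i, Measurable (f i)) :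
    ∫⁻ x : (i : ι) → E i, ∏ i, f i (x i) ∂Measure.pi μ = ∏ i, ∫⁻ x, f i x ∂μ i := by
  let e := (Fintype.equivFin ι).symm
  rw [← (measurePreserving_piCongrLeft μ e).lintegral_comp_emb
    (MeasurableEquiv.measurableEmbedding _)]
  simp_rw [← e.prod_comp, MeasurableEquiv.coe_piCongrLeft, Equiv.piCongrLeft_apply_apply]
  exact lintegral_fin_nat_prod_eq_prod _ _ fun i => hf _

theorem pi_withDensity (f : (i : ι) → E i → ℝ≥0∞) (hf : ∀ i, Measurable (f i))
    [∀ i, SigmaFinite ((μ i).withDensity (f i))] :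
    Measure.pi (fun i => (μ i).withDensity (f i))
      = (Measure.pi μ).withDensity fun x => ∏ i, f i (x i) := by
  refine Measure.pi_eq fun s hs => ?_
  classical
  have hbox : (Set.univ.pi s).indicator (fun x => ∏ i, f i (x i))
      = fun x => ∏ i, (s i).indicator (f i) (x i) := by
    ext x
    by_cases hx : x ∈ Set.univ.pi s
    · rw [Set.indicator_of_mem hx]
      exact prod_congr rfl fun i _ => (Set.indicator_of_mem (hx i (Set.mem_univ i)) _).symm
    · rw [Set.indicator_of_notMem hx]
      obtain ⟨i, hi⟩ : ∃ i, x i ∉ s i := by simpa [Set.mem_univ_pi] using hx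
      exact (prod_eq_zero (mem_univ i) (Set.indicator_of_notMem hi _)).symm
  rw [withDensity_apply _ (MeasurableSet.univ_pi hs), ← lintegral_indicator (.univ_pi hs), hbox,
    lintegral_fintype_prod_eq_prod μ _ fun i => (hf i).indicator (hs i)]
  exact prod_congr rfl fun i _ => by rw [lintegral_indicator (hs i), withDensity_apply _ (hs i)]

end Pi

theorem withDensity_ofReal_apply_le_lintegral_sqrt_mul {α : Type*} [MeasurableSpace α]
    {ν : Measure α} {f g : α → ℝ} (hf : ∀ x, 0 ≤ f x) {A : Set α} (hA : MeasurableSet A)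
    (hle : ∀ x ∈ A, f x ≤ g x) :
    ν.withDensity (fun x => ENNReal.ofReal (f x)) A ≤ ∫⁻ x, ENNReal.ofReal √(f x * g x) ∂ν := by
  rw [withDensity_apply _ hA]
  calc ∫⁻ x in A, ENNReal.ofReal (f x) ∂ν ≤ ∫⁻ x in A, ENNReal.ofReal √(f x * g x) ∂ν :=
        setLIntegral_mono' hA fun x hx => ENNReal.ofReal_le_ofReal <|
          calc f x = √(f x * f x) := (Real.sqrt_mul_self (hf x)).symm
            _ ≤ √(f x * g x) := Real.sqrt_le_sqrt (mul_le_mul_of_nonneg_left (hle x hx) (hf x))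
    _ ≤ _ := setLIntegral_le_lintegral _ _

section Gaussian

variable {m : ℕ} {σ2 : ℝ}

lemma gaussDensity_pos (hσ2 : 0 < σ2) (μ y : Fin m → ℝ) : 0 < gaussDensity m μ σ2 y := by
  unfold gaussDensity
  positivity

@[fun_prop]
lemma measurable_gaussDensity (μ : Fin m → ℝ) : Measurable (gaussDensity m μ σ2) := by
  unfold gaussDensity
  fun_prop

lemma gaussDensity_eq_prod_gaussianPDFReal (hσ2 : 0 < σ2) (μ y : Fin m → ℝ) :
    gaussDensity m μ σ2 y = ∏ j, gaussianPDFReal (μ j) σ2.toNNReal (y j) := by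
  have hpos : 0 < 2 * Real.pi * σ2 := by positivity
  simp only [gaussianPDFReal, Real.coe_toNNReal _ hσ2.le, prod_mul_distrib, prod_const,
    card_univ, Fintype.card_fin, ← Real.exp_sum, ← sum_div, sum_neg_distrib, gaussDensity]
  congr 1
  rw [Real.sqrt_eq_rpow, ← Real.rpow_neg hpos.le, ← Real.rpow_natCast, ← Real.rpow_mul hpos.le]
  ring_nf

theorem gaussMeasure_eq_pi_gaussianReal (hσ2 : 0 < σ2) (μ : Fin m → ℝ) :
    gaussMeasure m μ σ2 = Measure.pi fun j => gaussianReal (μ j) σ2.toNNReal := by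
  have hv : σ2.toNNReal ≠ 0 := (Real.toNNReal_pos.2 hσ2).ne'
  have (j : Fin m) : SigmaFinite (volume.withDensity (gaussianPDF (μ j) σ2.toNNReal)) := by
    rw [← gaussianReal_of_var_ne_zero _ hv]
    infer_instance
  simp_rw [gaussianReal_of_var_ne_zero _ hv]
  rw [pi_withDensity _ _ fun j => measurable_gaussianPDF _ _, ← volume_pi, gaussMeasure]
  congr 1 with y
  rw [gaussDensity_eq_prod_gaussianPDFReal hσ2,
    ENNReal.ofReal_prod_of_nonneg fun j _ => gaussianPDFReal_nonneg _ _ _]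
  rfl

lemma lintegral_gaussDensity (hσ2 : 0 < σ2) (μ : Fin m → ℝ) :
    ∫⁻ y, ENNReal.ofReal (gaussDensity m μ σ2 y) = 1 := by
  have : IsProbabilityMeasure (gaussMeasure m μ σ2) := by
    rw [gaussMeasure_eq_pi_gaussianReal hσ2]
    infer_instance
  simpa [gaussMeasure, withDensity_apply] using measure_univ (μ := gaussMeasure m μ σ2)

lemma sqrt_gaussDensity_mul (hσ2 : 0 < σ2) (a b y : Fin m → ℝ) :
    √(gaussDensity m a σ2 y * gaussDensity m b σ2 y)
      = Real.exp (-(∑ j, (a j - b j) ^ 2) / (8 * σ2))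
          * gaussDensity m (fun j => (a j + b j) / 2) σ2 y := by
  have hparallel : (∑ j, (y j - a j) ^ 2) + ∑ j, (y j - b j) ^ 2
      = 2 * (∑ j, (y j - (a j + b j) / 2) ^ 2) + (∑ j, (a j - b j) ^ 2) / 2 := by
    rw [mul_sum, sum_div, ← sum_add_distrib, ← sum_add_distrib]
    exact sum_congr rfl fun j _ => by ring
  rw [← Real.sqrt_sq (mul_nonneg (Real.exp_nonneg _) (gaussDensity_pos hσ2 _ y).le)]
  congr 1
  simp only [gaussDensity, mul_pow, ← Real.exp_nat_mul]
  rw [mul_mul_mul_comm, ← Real.exp_add, ← pow_two, mul_left_comm, ← Real.exp_add]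
  congr 2
  linear_combination (-1 / (2 * σ2)) * hparallel

lemma lintegral_sqrt_gaussDensity_mul (hσ2 : 0 < σ2) (a b : Fin m → ℝ) :
    ∫⁻ y, ENNReal.ofReal √(gaussDensity m a σ2 y * gaussDensity m b σ2 y)
      = ENNReal.ofReal (Real.exp (-(∑ j, (a j - b j) ^ 2) / (8 * σ2))) := by
  simp_rw [sqrt_gaussDensity_mul hσ2 a b, ENNReal.ofReal_mul (Real.exp_nonneg _)]
  rw [lintegral_const_mul _ (measurable_gaussDensity _).ennreal_ofReal,
    lintegral_gaussDensity hσ2, mul_one]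

end Gaussian

section Test

variable {ι : Type*} [Fintype ι] {m : ℕ} {σ2 : ℝ}

theorem pi_gaussMeasure_apply_le (hσ2 : 0 < σ2) (μ ν : ι → Fin m → ℝ)
    {A : Set (ι → Fin m → ℝ)} (hA : MeasurableSet A)
    (hle : ∀ y ∈ A, ∏ i, gaussDensity m (μ i) σ2 (y i) ≤ ∏ i, gaussDensity m (ν i) σ2 (y i)) :
    Measure.pi (fun i => gaussMeasure m (μ i) σ2) A
      ≤ ENNReal.ofReal (Real.exp (-(∑ i, ∑ j, (μ i j - ν i j) ^ 2) / (8 * σ2))) := by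
  have hμ (y : ι → Fin m → ℝ) : ∏ i, ENNReal.ofReal (gaussDensity m (μ i) σ2 (y i))
      = ENNReal.ofReal (∏ i, gaussDensity m (μ i) σ2 (y i)) :=
    (ENNReal.ofReal_prod_of_nonneg fun i _ => (gaussDensity_pos hσ2 (μ i) (y i)).le).symm
  have hμ_nonneg (y : ι → Fin m → ℝ) : 0 ≤ ∏ i, gaussDensity m (μ i) σ2 (y i) :=
    prod_nonneg fun i _ => (gaussDensity_pos hσ2 (μ i) (y i)).le
  simp only [gaussMeasure]
  rw [pi_withDensity _ _ fun i => (measurable_gaussDensity _).ennreal_ofReal, ← volume_pi]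
  simp only [hμ]
  refine (withDensity_ofReal_apply_le_lintegral_sqrt_mul
    (ν := (volume : Measure (ι → Fin m → ℝ)))
    (f := fun y => ∏ i, gaussDensity m (μ i) σ2 (y i))
    (g := fun y => ∏ i, gaussDensity m (ν i) σ2 (y i)) hμ_nonneg hA hle).trans_eq ?_
  calc ∫⁻ y : ι → Fin m → ℝ, ENNReal.ofReal
          √((∏ i, gaussDensity m (μ i) σ2 (y i)) * ∏ i, gaussDensity m (ν i) σ2 (y i))
    _ = ∫⁻ y : ι → Fin m → ℝ, ∏ i, ENNReal.ofReal
          √(gaussDensity m (μ i) σ2 (y i) * gaussDensity m (ν i) σ2 (y i)) := by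
        congr 1 with y
        rw [← prod_mul_distrib, Real.sqrt_prod _ fun i _ =>
            mul_nonneg (gaussDensity_pos hσ2 (μ i) (y i)).le
              (gaussDensity_pos hσ2 (ν i) (y i)).le,
          ENNReal.ofReal_prod_of_nonneg fun i _ => Real.sqrt_nonneg _]
    _ = ∏ i, ∫⁻ x : Fin m → ℝ,
          ENNReal.ofReal √(gaussDensity m (μ i) σ2 x * gaussDensity m (ν i) σ2 x) := by
        rw [volume_pi]
        exact lintegral_fintype_prod_eq_prod _
          (fun i x => ENNReal.ofReal √(gaussDensity m (μ i) σ2 x * gaussDensity m (ν i) σ2 x))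
          fun i => by fun_prop
    _ = ENNReal.ofReal (Real.exp (-(∑ i, ∑ j, (μ i j - ν i j) ^ 2) / (8 * σ2))) := by
        simp_rw [lintegral_sqrt_gaussDensity_mul hσ2, ← ENNReal.ofReal_prod_of_nonneg
          fun i _ => Real.exp_nonneg _, ← Real.exp_sum, ← sum_div, sum_neg_distrib]

theorem exists_test_pi_gaussMeasure (hσ2 : 0 < σ2) (μ ν : ι → Fin m → ℝ) :
    ∃ Φ : (ι → Fin m → ℝ) → ℝ, Measurable Φ ∧ (∀ y, Φ y = 0 ∨ Φ y = 1) ∧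
      ∫ y, Φ y ∂(Measure.pi fun i => gaussMeasure m (μ i) σ2)
        ≤ Real.exp (-(∑ i, ∑ j, (μ i j - ν i j) ^ 2) / (8 * σ2)) ∧
      ∫ y, (1 - Φ y) ∂(Measure.pi fun i => gaussMeasure m (ν i) σ2)
        ≤ Real.exp (-(∑ i, ∑ j, (μ i j - ν i j) ^ 2) / (8 * σ2)) := by
  set A := {y : ι → Fin m → ℝ |
    ∏ i, gaussDensity m (μ i) σ2 (y i) ≤ ∏ i, gaussDensity m (ν i) σ2 (y i)}
  have hA : MeasurableSet A := measurableSet_le (by fun_prop) (by fun_prop)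
  have hcompl : (fun y => 1 - A.indicator 1 y) = Aᶜ.indicator (1 : (ι → Fin m → ℝ) → ℝ) := by
    rw [Set.indicator_compl]
    rfl
  refine ⟨A.indicator 1, measurable_one.indicator hA, fun y => ?_, ?_, ?_⟩
  · by_cases hy : y ∈ A <;> simp [hy]
  · rw [integral_indicator_one hA, measureReal_def]
    exact ENNReal.toReal_le_of_le_ofReal (Real.exp_nonneg _)
      (pi_gaussMeasure_apply_le hσ2 μ ν hA fun y hy => hy)
  · rw [hcompl, integral_indicator_one hA.compl, measureReal_def]
    simp_rw [sub_sq_comm (μ _ _)]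
    exact ENNReal.toReal_le_of_le_ofReal (Real.exp_nonneg _)
      (pi_gaussMeasure_apply_le hσ2 ν μ hA.compl fun y hy => le_of_not_ge hy)

end Test

theorem Matrix.IsHermitian.mul_dotProduct_self_le {n : Type*} [Fintype n] [DecidableEq n]
    {A : Matrix n n ℝ} (hA : A.IsHermitian) {c : ℝ} (hc : ∀ i, c ≤ hA.eigenvalues i)
    (v : n → ℝ) : c * (v ⬝ᵥ v) ≤ v ⬝ᵥ A *ᵥ v := by
  set U : Matrix n n ℝ := (hA.eigenvectorUnitary : Matrix n n ℝ)
  set D := diagonal hA.eigenvalues with hD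
  have hA_eq : A = U * D * star U := by
    simpa [RCLike.ofReal_real_eq_id] using hA.spectral_theorem
  have hU : U * star U = 1 := Matrix.mem_unitaryGroup_iff.mp hA.eigenvectorUnitary.2
  set w := v ᵥ* U
  have hw : star U *ᵥ v = w := by
    ext i
    simp [mulVec, vecMul, dotProduct, w, mul_comm, star_apply]
  have hquad : v ⬝ᵥ A *ᵥ v = (w ᵥ* D) ⬝ᵥ w := by
    rw [hA_eq, ← mulVec_mulVec, ← mulVec_mulVec, dotProduct_mulVec, dotProduct_mulVec, hw]
  have hnorm : v ⬝ᵥ v = w ⬝ᵥ w :=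
    calc v ⬝ᵥ v = w ⬝ᵥ star U *ᵥ v := by
          rw [← dotProduct_mulVec, mulVec_mulVec, hU, one_mulVec]
      _ = w ⬝ᵥ w := by rw [hw]
  rw [hquad, hnorm, hD]
  simp only [dotProduct, vecMul_diagonal, mul_sum]
  exact sum_le_sum fun i _ => by nlinarith [hc i, mul_self_nonneg (w i)]

theorem mul_dotProduct_self_le_mulVec_dotProduct {m : ℕ} {n : Type*} [Fintype n] [DecidableEq n]
    (X : Matrix (Fin m) n ℝ) (hH : ((m : ℝ)⁻¹ • (Xᵀ * X)).IsHermitian) {c : ℝ}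
    (hc : ∀ i, c ≤ hH.eigenvalues i) (v : n → ℝ) :
    m * c * (v ⬝ᵥ v) ≤ X *ᵥ v ⬝ᵥ X *ᵥ v := by
  have h := hH.mul_dotProduct_self_le hc v
  rw [smul_mulVec, dotProduct_smul, smul_eq_mul, ← mulVec_mulVec, dotProduct_mulVec,
    vecMul_transpose] at h
  calc m * c * (v ⬝ᵥ v) = m * (c * (v ⬝ᵥ v)) := mul_assoc _ _ _
    _ ≤ m * ((m : ℝ)⁻¹ * (X *ᵥ v ⬝ᵥ X *ᵥ v)) := by gcongr
    _ = (m * (m : ℝ)⁻¹) * (X *ᵥ v ⬝ᵥ X *ᵥ v) := (mul_assoc _ _ _).symm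
    _ ≤ X *ᵥ v ⬝ᵥ X *ᵥ v :=
      mul_le_of_le_one_left (dotProduct_self_star_nonneg _) mul_inv_le_one

theorem card_mul_sq_le_sum_sq {ι : Type*} {s : Finset ι} {x : ι → ℝ} {ε : ℝ} (hε : 0 ≤ ε)
    (h : ε ≤ 1 / #s * ∑ i ∈ s, |x i|) : #s * ε ^ 2 ≤ ∑ i ∈ s, x i ^ 2 := by
  rcases (#s).eq_zero_or_pos with hs | hs
  · rw [hs, Nat.cast_zero, zero_mul]
    positivity
  have hs' : (0 : ℝ) < #s := by exact_mod_cast hs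
  have hmean : #s * ε ≤ ∑ i ∈ s, |x i| := by
    rwa [one_div, ← div_eq_inv_mul, le_div_iff₀' hs'] at h
  have hcs : (∑ i ∈ s, |x i|) ^ 2 ≤ #s * ∑ i ∈ s, x i ^ 2 := by
    simpa only [sq_abs] using sq_sum_le_card_mul_sum_sq (s := s) (f := fun i => |x i|)
  nlinarith [pow_le_pow_left₀ (by positivity) hmean 2]

theorem card_mul_le_sum_sum_sq_mulVec_sub {m n : ℕ} {κ : Type*} [Fintype κ] [DecidableEq κ]
    (X : Matrix (Fin m) κ ℝ) (hH : ((m : ℝ)⁻¹ • (Xᵀ * X)).IsHermitian) {c : ℝ} (hc0 : 0 ≤ c)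
    (hc : ∀ i, c ≤ hH.eigenvalues i) {ε : ℝ} (hε : 0 ≤ ε) (β0 β1 : Fin n → κ → ℝ) {k : κ}
    (hk : ε ≤ 1 / (n : ℝ) * ∑ i, |β1 i k - β0 i k|) :
    n * (ε ^ 2 * c * m) ≤ ∑ i, ∑ j, ((X *ᵥ β0 i) j - (X *ᵥ β1 i) j) ^ 2 := by
  have hcoord : n * ε ^ 2 ≤ ∑ i, (β0 i k - β1 i k) ^ 2 := by
    simpa using card_mul_sq_le_sum_sq (s := univ) (x := fun i => β0 i k - β1 i k) hε
      (by simpa [abs_sub_comm] using hk)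
  calc n * (ε ^ 2 * c * m) = m * c * (n * ε ^ 2) := by ring
    _ ≤ ∑ i, m * c * (β0 i k - β1 i k) ^ 2 := by
      rw [← mul_sum]
      gcongr
    _ ≤ ∑ i, m * c * ((β0 i - β1 i) ⬝ᵥ (β0 i - β1 i)) := by
      gcongr with i
      simpa only [dotProduct, Pi.sub_apply, sq] using
        single_le_sum (f := fun k => (β0 i - β1 i) k * (β0 i - β1 i) k)
          (fun k _ => mul_self_nonneg _) (mem_univ k)
    _ ≤ ∑ i, X *ᵥ (β0 i - β1 i) ⬝ᵥ X *ᵥ (β0 i - β1 i) :=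
      sum_le_sum fun i _ => mul_dotProduct_self_le_mulVec_dotProduct X hH hc _
    _ = ∑ i, ∑ j, ((X *ᵥ β0 i) j - (X *ᵥ β1 i) j) ^ 2 := by
      simp only [mulVec_sub, dotProduct, Pi.sub_apply, sq]

theorem exists_exponential_test (m p : ℕ)
    (X : Matrix (Fin m) (Fin p) ℝ)
    (dmin σ2 ε M : ℝ) (hσ2 : 0 < σ2) (hε : 0 < ε)
    (hH : (((m : ℝ)⁻¹) • (Xᵀ * X)).IsHermitian)
    (hdmin : IsLeast (Set.range hH.eigenvalues) dmin) (hdpos : 0 < dmin)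
    (hm : 32 * Real.log 2 * σ2 * p / (ε ^ 2 * dmin) < (m : ℝ)) :
    ∃ C : ℝ, 0 < C ∧ ∃ N : ℕ, 1 ≤ N ∧
      ∀ n : ℕ, N ≤ n → ∀ β0 β1 : Fin n → Fin p → ℝ,
        (∀ i k, |β0 i k| ≤ M) → (∀ i k, |β1 i k| ≤ M) →
        (∃ k, ε ≤ (1 / (n : ℝ)) * ∑ i, |β1 i k - β0 i k|) →
        ∃ Φ : (Fin n → Fin m → ℝ) → ℝ, Measurable Φ ∧ (∀ y, Φ y = 0 ∨ Φ y = 1) ∧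
          (∫ y, Φ y ∂(Measure.pi fun i => gaussMeasure m (X.mulVec (β0 i)) σ2))
            ≤ Real.exp (-C * n) ∧
          (∫ y, (1 - Φ y) ∂(Measure.pi fun i => gaussMeasure m (X.mulVec (β1 i)) σ2))
            ≤ Real.exp (-C * n) := by
  have hm0 : (0 : ℝ) < m := lt_of_le_of_lt (by positivity) hm
  refine ⟨ε ^ 2 * dmin * m / (8 * σ2), by positivity, 1, le_rfl,
    fun n _ β0 β1 _ _ ⟨k, hk⟩ => ?_⟩
  have hsep := card_mul_le_sum_sum_sq_mulVec_sub X hH hdpos.le (fun i => hdmin.2 ⟨i, rfl⟩)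
    hε.le β0 β1 hk
  have hexp : Real.exp (-(∑ i, ∑ j, ((X *ᵥ β0 i) j - (X *ᵥ β1 i) j) ^ 2) / (8 * σ2))
      ≤ Real.exp (-(ε ^ 2 * dmin * m / (8 * σ2)) * n) := by
    gcongr
    rw [neg_mul, neg_div, neg_le_neg_iff, div_mul_eq_mul_div, mul_comm]
    gcongr
  obtain ⟨Φ, hΦ, h01, htype1, htype2⟩ :=
    exists_test_pi_gaussMeasure hσ2 (fun i => X *ᵥ β0 i) (fun i => X *ᵥ β1 i)
  exact ⟨Φ, hΦ, h01, htype1.trans hexp, htype2.trans hexp⟩
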